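/- Let d be a real number. If d ≥ 2, then e^{π√d} − e^{π√(d−1)} > e^{π√d}/√d. -/

import Mathlib

/-!
Put `s = √d`, `t = √(d - 1)` and `v = s + t ≥ 1 + √2`. Since `s² - t² = 1` we have `s - t = 1 / v`,
and the claim is equivalent to `s / (s - 1) < exp (π (s - t)) = exp (π / v)`, where
`s / (s - 1) = (v² + 1) / (v - 1)²`. The third-order Taylor bound for `exp` reduces this to a
polynomial inequality in `v`, which holds for `v ≥ 1 + √2`.
-/

open Real

lemma one_add_add_sq_div_two_add_cube_div_six_le_exp {x : ℝ} (hx : 0 ≤ x) :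
    1 + x + x ^ 2 / 2 + x ^ 3 / 6 ≤ exp x := by
  have h := sum_le_exp_of_nonneg hx 4
  norm_num [Finset.sum_range_succ, Nat.factorial] at h
  linarith

lemma two_mul_pow_four_lt_cubic_mul_sub_one_sq {p v : ℝ} (hp : 3.14 ≤ p) (hv : 2.414 ≤ v) :
    2 * v ^ 4 < (p * v ^ 2 + p ^ 2 * v / 2 + p ^ 3 / 6) * (v - 1) ^ 2 := by
  have hnum : 2 * v ^ 4 < (3.14 * v ^ 2 + 3.14 ^ 2 * v / 2 + 3.14 ^ 3 / 6) * (v - 1) ^ 2 := by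
    have hv' := sub_nonneg.mpr hv
    nlinarith [mul_nonneg hv' (sq_nonneg v), sq_nonneg (v - 2.414),
      mul_nonneg hv' (sq_nonneg (v - 2.414)), mul_nonneg (mul_nonneg hv' hv') (sq_nonneg v)]
  have hcoeff : 3.14 * v ^ 2 + 3.14 ^ 2 * v / 2 + 3.14 ^ 3 / 6 ≤
      p * v ^ 2 + p ^ 2 * v / 2 + p ^ 3 / 6 := by
    have hv0 : 0 ≤ v := by linarith
    gcongr
  nlinarith [sq_nonneg (v - 1)]

lemma sq_add_one_div_sub_one_sq_lt_exp_pi_div {v : ℝ} (hv : 1 + √2 ≤ v) :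
    (v ^ 2 + 1) / (v - 1) ^ 2 < exp (π / v) := by
  have hv' : 2.414 ≤ v := by nlinarith [sq_sqrt (zero_le_two : (0 : ℝ) ≤ 2), sqrt_nonneg 2]
  have hv0 : 0 < v := by linarith
  have hpoly := two_mul_pow_four_lt_cubic_mul_sub_one_sq pi_gt_d2.le hv'
  have hgap : (1 + π / v + (π / v) ^ 2 / 2 + (π / v) ^ 3 / 6) * (v - 1) ^ 2 - (v ^ 2 + 1) =
      ((π * v ^ 2 + π ^ 2 * v / 2 + π ^ 3 / 6) * (v - 1) ^ 2 - 2 * v ^ 4) / v ^ 3 := by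
    field_simp
    ring
  calc (v ^ 2 + 1) / (v - 1) ^ 2 < 1 + π / v + (π / v) ^ 2 / 2 + (π / v) ^ 3 / 6 := by
        rw [div_lt_iff₀ (by nlinarith), ← sub_pos, hgap]
        exact div_pos (sub_pos.mpr hpoly) (pow_pos hv0 3)
    _ ≤ exp (π / v) := one_add_add_sq_div_two_add_cube_div_six_le_exp (by positivity)

lemma exp_div_lt_exp_sub_exp {a b s : ℝ} (hs : 1 < s) (h : s / (s - 1) < exp (a - b)) :
    exp a / s < exp a - exp b := by
  rw [exp_sub, div_lt_div_iff₀ (by linarith) (exp_pos b)] at h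
  rw [div_lt_iff₀ (by linarith)]
  linarith

/-- **Lemma.** Let `d` be a real number. If `d ≥ 2`, then
`e^{π√d} − e^{π√(d−1)} > e^{π√d}/√d`. -/
theorem exp_pi_sqrt_gap (d : ℝ) (hd : 2 ≤ d) :
    Real.exp (Real.pi * Real.sqrt d) - Real.exp (Real.pi * Real.sqrt (d - 1)) >
      Real.exp (Real.pi * Real.sqrt d) / Real.sqrt d := by
  set s := √d
  set t := √(d - 1)
  have hs2 : s ^ 2 = d := sq_sqrt (by linarith)
  have ht2 : t ^ 2 = d - 1 := sq_sqrt (by linarith)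
  have hs : √2 ≤ s := sqrt_le_sqrt hd
  have hs1 : 1 < s := one_lt_sqrt_two.trans_le hs
  have ht : 1 ≤ t := one_le_sqrt.mpr (by linarith)
  have hv : 1 + √2 ≤ s + t := by linarith
  have hdiff : π * s - π * t = π / (s + t) := by
    rw [eq_div_iff (by linarith)]
    linear_combination π * (hs2 - ht2)
  have hratio : s / (s - 1) = ((s + t) ^ 2 + 1) / (s + t - 1) ^ 2 := by
    rw [div_eq_div_iff (by linarith) (by nlinarith)]
    linear_combination ht2 - hs2
  refine exp_div_lt_exp_sub_exp hs1 ?_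
  rw [hratio, hdiff]
  exact sq_add_one_div_sub_one_sq_lt_exp_pi_div hv
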